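/- (Global validity of the Benders optimality cut.) Fix J ∈ ℕ and, for each j = 1,…,J, matrices A_j ∈ ℝ^{m_j×M} and B_j ∈ ℝ^{m_j×N}, vectors e_j ∈ ℝ^{m_j}, c_j ∈ ℝ^M, d_j ∈ ℝ^N, a scalar f_j ∈ ℝ, and an objective vector d ∈ ℝ^N. For X ∈ ℝ^M, call Y ∈ ℝ^N feasible for X if ‖A_j X + B_j Y + e_j‖₂ ≤ c_jᵀ X + d_jᵀ Y + f_j for all j. Suppose (u_j, μ_j) ∈ ℝ^{m_j} × ℝ, j = 1,…,J, satisfies Σ_j (B_jᵀ u_j + μ_j d_j) = d and ‖u_j‖₂ ≤ μ_j for all j (note this dual feasible set does not depend on X). Then for every X ∈ ℝ^M and every Y feasible for X, dᵀ Y ≥ Σ_j (−u_jᵀ(A_j X + e_j) − μ_j(c_jᵀ X + f_j)). Consequently, for every X for which the feasible set is nonempty, the sub-problem optimal value φ(X) = inf{dᵀY : Y feasible for X} satisfies φ(X) ≥ Σ_j (−u_jᵀ(A_j X + e_j) − μ_j(c_jᵀ X + f_j)); i.e., the affine optimality cut generated from any dual feasible point is a valid lower bound on φ at every X, not only at the point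 where it was generated. -/

import Mathlib

/-!
Weak duality for second-order cone programs. The Lorentz cone `{(w, t) : ‖w‖₂ ≤ t}` is self-dual
by Cauchy–Schwarz, so pairing each primal constraint with its dual multiplier `(u_j, μ_j)` gives
`u_jᵀ(A_j X + B_j Y + e_j) + μ_j (c_jᵀ X + d_jᵀ Y + f_j) ≥ 0`. Summing over `j` and using the dual
equality constraint, the terms in `Y` add up to `dᵀY`, which is therefore bounded below by an affine
function of `X` alone. The dual constraints do not involve `X`, so this holds at every `X`, and
passes to the infimum `φ(X)`.
-/

open Matrix Finset

noncomputable def eNorm {k : ℕ} (x : Fin k → ℝ) : ℝ := Real.sqrt (∑ i, x i ^ 2)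

theorem eNorm_eq_norm_toLp {k : ℕ} (x : Fin k → ℝ) : eNorm x = ‖WithLp.toLp 2 x‖ := by
  simp [eNorm, EuclideanSpace.norm_eq]

theorem eNorm_nonneg {k : ℕ} (x : Fin k → ℝ) : 0 ≤ eNorm x :=
  Real.sqrt_nonneg _

theorem abs_dotProduct_le_eNorm_mul_eNorm {k : ℕ} (v w : Fin k → ℝ) :
    |v ⬝ᵥ w| ≤ eNorm v * eNorm w := by
  rw [eNorm_eq_norm_toLp, eNorm_eq_norm_toLp, dotProduct_comm]
  exact abs_real_inner_le_norm (WithLp.toLp 2 v) (WithLp.toLp 2 w)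

theorem dotProduct_add_mul_nonneg_of_eNorm_le {k : ℕ} {u w : Fin k → ℝ} {μ t : ℝ}
    (hu : eNorm u ≤ μ) (hw : eNorm w ≤ t) : 0 ≤ u ⬝ᵥ w + μ * t := by
  have hprod : eNorm u * eNorm w ≤ μ * t :=
    mul_le_mul hu hw (eNorm_nonneg w) ((eNorm_nonneg u).trans hu)
  linarith [neg_abs_le (u ⬝ᵥ w), abs_dotProduct_le_eNorm_mul_eNorm u w]

section WeakDuality

variable {p q : Type*} [Fintype p] [Fintype q]

theorem transpose_mulVec_add_smul_dotProduct {k : ℕ} (B : Matrix (Fin k) q ℝ)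
    (u : Fin k → ℝ) (μ : ℝ) (c Y : q → ℝ) :
    (Bᵀ *ᵥ u + μ • c) ⬝ᵥ Y = u ⬝ᵥ (B *ᵥ Y) + μ * (c ⬝ᵥ Y) := by
  rw [add_dotProduct, smul_dotProduct, mulVec_transpose, ← dotProduct_mulVec, smul_eq_mul]

theorem neg_dotProduct_sub_mul_le_of_eNorm_le {k : ℕ} (A : Matrix (Fin k) p ℝ)
    (B : Matrix (Fin k) q ℝ) (e u : Fin k → ℝ) (c : p → ℝ) (c' : q → ℝ) (f μ : ℝ)
    (X : p → ℝ) (Y : q → ℝ) (hu : eNorm u ≤ μ)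
    (hfeas : eNorm (A *ᵥ X + B *ᵥ Y + e) ≤ c ⬝ᵥ X + c' ⬝ᵥ Y + f) :
    -(u ⬝ᵥ (A *ᵥ X + e)) - μ * (c ⬝ᵥ X + f) ≤ (Bᵀ *ᵥ u + μ • c') ⬝ᵥ Y := by
  have hpair := dotProduct_add_mul_nonneg_of_eNorm_le hu hfeas
  rw [transpose_mulVec_add_smul_dotProduct]
  simp only [dotProduct_add] at hpair ⊢
  linarith

variable {ι : Type*} [Fintype ι] {m : ι → ℕ}

theorem benders_cut_le_dotProduct (A : ∀ j, Matrix (Fin (m j)) p ℝ)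
    (B : ∀ j, Matrix (Fin (m j)) q ℝ) (e u : ∀ j, Fin (m j) → ℝ) (c : ι → p → ℝ)
    (c' : ι → q → ℝ) (f μ : ι → ℝ) (d : q → ℝ)
    (hdualEq : ∑ j, ((B j)ᵀ *ᵥ u j + μ j • c' j) = d) (hdualCone : ∀ j, eNorm (u j) ≤ μ j)
    (X : p → ℝ) (Y : q → ℝ)
    (hfeas : ∀ j, eNorm (A j *ᵥ X + B j *ᵥ Y + e j) ≤ c j ⬝ᵥ X + c' j ⬝ᵥ Y + f j) :
    ∑ j, (-(u j ⬝ᵥ (A j *ᵥ X + e j)) - μ j * (c j ⬝ᵥ X + f j)) ≤ d ⬝ᵥ Y := by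
  rw [← hdualEq, sum_dotProduct]
  exact sum_le_sum fun j _ ↦
    neg_dotProduct_sub_mul_le_of_eNorm_le _ _ _ _ _ _ _ _ X Y (hdualCone j) (hfeas j)

end WeakDuality

/-- Global validity of the Benders optimality cut: any fixed dual feasible point
`(u_j, μ_j)_j` (its feasible set does not depend on `X`) yields, for every `X` and
every `Y` feasible for `X`, `dᵀY ≥ Σ_j (−u_jᵀ(A_j X + e_j) − μ_j(c_jᵀ X + f_j))`;
hence for every `X` with nonempty feasible set the sub-problem optimal value
`φ(X)` is bounded below by the same affine cut. -/
theorem benders_cut_globally_valid (J M N : ℕ) (m : Fin J → ℕ)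
    (A : ∀ j, Matrix (Fin (m j)) (Fin M) ℝ)
    (B : ∀ j, Matrix (Fin (m j)) (Fin N) ℝ)
    (e : ∀ j, Fin (m j) → ℝ) (cj : Fin J → Fin M → ℝ) (dj : Fin J → Fin N → ℝ)
    (f : Fin J → ℝ) (d : Fin N → ℝ)
    (u : ∀ j, Fin (m j) → ℝ) (μ : Fin J → ℝ)
    (hdualEq : ∑ j, ((B j)ᵀ *ᵥ u j + μ j • dj j) = d)
    (hdualCone : ∀ j, eNorm (u j) ≤ μ j) :
    (∀ (X : Fin M → ℝ) (Y : Fin N → ℝ),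
        (∀ j, eNorm ((A j) *ᵥ X + (B j) *ᵥ Y + e j) ≤ cj j ⬝ᵥ X + dj j ⬝ᵥ Y + f j) →
        d ⬝ᵥ Y ≥ ∑ j, (-(u j ⬝ᵥ ((A j) *ᵥ X + e j)) - μ j * (cj j ⬝ᵥ X + f j))) ∧
    (∀ X : Fin M → ℝ,
        (∃ Y : Fin N → ℝ,
          ∀ j, eNorm ((A j) *ᵥ X + (B j) *ᵥ Y + e j) ≤ cj j ⬝ᵥ X + dj j ⬝ᵥ Y + f j) →
        sInf {r : ℝ | ∃ Y : Fin N → ℝ,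
            (∀ j, eNorm ((A j) *ᵥ X + (B j) *ᵥ Y + e j) ≤ cj j ⬝ᵥ X + dj j ⬝ᵥ Y + f j) ∧
            r = d ⬝ᵥ Y} ≥
          ∑ j, (-(u j ⬝ᵥ ((A j) *ᵥ X + e j)) - μ j * (cj j ⬝ᵥ X + f j))) := by
  have cut := benders_cut_le_dotProduct A B e u cj dj f μ d hdualEq hdualCone
  refine ⟨cut, ?_⟩
  rintro X ⟨Y₀, hY₀⟩
  refine le_csInf ⟨d ⬝ᵥ Y₀, Y₀, hY₀, rfl⟩ ?_
  rintro r ⟨Y, hY, rfl⟩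
  exact cut X Y hY
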